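/- The only solutions (n, m, k, d) in non-negative integers with m ≥ 1 to L_n = 10^d·F_m + L_k, where d = ⌊log₁₀ L_k⌋ + 1 is the number of decimal digits of L_k, are (5,1,1,1) and (5,2,1,1); i.e., L_5 = 10·F_1 + L_1 = 10·F_2 + L_1 = 11. -/

import Mathlib

def lucas : ℕ → ℕ
  | 0 => 2
  | 1 => 1
  | n + 2 => lucas (n + 1) + lucas n

/-!
Modulo 5 we have `L_n ≡ 2 · 3^n`, so `L_n ≡ L_k` forces `n = k + 4i`, and Binet's formula
gives `L_{k+4i} - L_k = 5 F_{k+2i} F_{2i}`. With `d = c + 1` the equation becomes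
`2 · 10^c · F_m = F_{k+2i} F_{2i}`. Since `F_{k+2i}` divides `2 · 10^c · gcd(F_{k+2i}, F_m)`
and `gcd(F_{k+2i}, F_m) = F_{gcd(k+2i, m)}`, either `gcd(k+2i, m) ≤ (k+2i)/2` or `m = k+2i`;
both bound `i` linearly in `k`, and `F_k ≤ L_k < 10^d` bounds `k` linearly in `d`. Finally
`5^e ∣ F_j` implies `5^e ∣ j`, so `5^c` divides `(k+2i) · 2i`, which is at most quadratic in
`d`; hence `d ≤ 6`, and the remaining finitely many cases are checked by computation.
-/

open Nat

lemma lucas_add_two (n : ℕ) : lucas (n + 2) = lucas (n + 1) + lucas n := rfl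

lemma lucas_succ (n : ℕ) : lucas (n + 1) = fib n + fib (n + 2) := by
  induction n using Nat.twoStepInduction with
  | zero => rfl
  | one => rfl
  | more n ih₀ ih₁ =>
    rw [lucas_add_two, ih₀, ih₁]
    simp only [fib_add_two]
    ring

lemma lucas_pos (n : ℕ) : 0 < lucas n := by
  cases n with
  | zero => decide
  | succ n => rw [lucas_succ]; exact Nat.add_pos_right _ (fib_pos.2 (by omega))

lemma lucas_add_fib (n : ℕ) : lucas n + fib n = 2 * fib (n + 1) := by
  cases n with
  | zero => rfl
  | succ n => rw [lucas_succ, fib_add_two (n := n)]; ring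

lemma fib_le_lucas (n : ℕ) : fib n ≤ lucas n := by
  have := lucas_add_fib n
  have := fib_le_fib_succ (n := n)
  omega

lemma lucas_le_lucas {a b : ℕ} (ha : a ≠ 0) (hab : a ≤ b) : lucas a ≤ lucas b := by
  obtain ⟨a, rfl⟩ := exists_eq_add_one_of_ne_zero ha
  obtain ⟨b, rfl⟩ := exists_eq_add_one_of_ne_zero (by omega : b ≠ 0)
  rw [lucas_succ, lucas_succ]
  exact Nat.add_le_add (fib_mono (by omega)) (fib_mono (by omega))

section Binet

open Real

lemma coe_lucas_eq (n : ℕ) : (lucas n : ℝ) = goldenRatio ^ n + goldenConj ^ n := by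
  induction n using Nat.twoStepInduction with
  | zero => norm_num [lucas]
  | one => simp [lucas, goldenRatio_add_goldenConj]
  | more n ih₀ ih₁ =>
    push_cast [lucas_add_two, ih₀, ih₁]
    linear_combination -goldenRatio ^ n * goldenRatio_sq - goldenConj ^ n * goldenConj_sq

lemma lucas_add_four_mul (a i : ℕ) :
    lucas (a + 4 * i) = lucas a + 5 * fib (a + 2 * i) * fib (2 * i) := by
  have hxy : goldenRatio ^ (2 * i) * goldenConj ^ (2 * i) = 1 := by
    rw [← mul_pow, goldenRatio_mul_goldenConj, pow_mul]; norm_num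
  have h5 : √5 ^ 2 = 5 := Real.sq_sqrt (by norm_num)
  have : (lucas (a + 4 * i) : ℝ) = lucas a + 5 * fib (a + 2 * i) * fib (2 * i) := by
    rw [coe_lucas_eq, coe_lucas_eq, coe_fib_eq, coe_fib_eq,
      show a + 4 * i = a + 2 * i + 2 * i by ring]
    simp only [pow_add]
    field_simp
    rw [h5]
    linear_combination 5 * (goldenRatio ^ a + goldenConj ^ a) * hxy
  exact_mod_cast this

lemma coe_fib_five_mul (c : ℕ) :
    (fib (5 * c) : ℤ) = 5 * fib c * (5 * fib c ^ 2 * (fib c ^ 2 + (-1) ^ c) + 1) := by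
  have hσ : (goldenRatio ^ c * goldenConj ^ c) ^ 2 = 1 := by
    rw [← mul_pow, goldenRatio_mul_goldenConj, ← pow_mul, mul_comm, pow_mul]; norm_num
  have h5 : √5 ^ 2 = 5 := Real.sq_sqrt (by norm_num)
  have : (fib (5 * c) : ℝ) = 5 * fib c * (5 * fib c ^ 2 * (fib c ^ 2 + (-1) ^ c) + 1) := by
    rw [coe_fib_eq, coe_fib_eq, pow_mul', pow_mul', ← goldenRatio_mul_goldenConj, mul_pow]
    generalize goldenRatio ^ c = x, goldenConj ^ c = y at *
    field_simp
    rw [show √5 ^ 4 = (√5 ^ 2) ^ 2 by ring, h5]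
    linear_combination 125 * (x - y) * hσ
  exact_mod_cast this

end Binet

lemma coe_lucas_zmod_five (n : ℕ) : (lucas n : ZMod 5) = 2 * 3 ^ n := by
  induction n using Nat.twoStepInduction with
  | zero => rfl
  | one => rfl
  | more n ih₀ ih₁ =>
    push_cast [lucas_add_two, ih₀, ih₁]
    have h10 : (10 : ZMod 5) = 0 := rfl
    linear_combination -3 ^ n * h10

lemma orderOf_three_zmod_five : orderOf (3 : ZMod 5) = 4 :=
  (orderOf_eq_iff (by norm_num)).2 ⟨rfl, by decide⟩

lemma modEq_four_of_lucas_modEq_five {a b : ℕ} (h : lucas a ≡ lucas b [MOD 5]) :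
    a ≡ b [MOD 4] := by
  rw [← ZMod.natCast_eq_natCast_iff, coe_lucas_zmod_five, coe_lucas_zmod_five] at h
  have h3 : (3 : ZMod 5) ^ a = 3 ^ b :=
    (IsUnit.of_mul_eq_one (a := (2 : ZMod 5)) 3 rfl).mul_left_cancel h
  have hfin : IsOfFinOrder (3 : ZMod 5) :=
    orderOf_pos_iff.mp (by rw [orderOf_three_zmod_five]; norm_num)
  rwa [hfin.pow_eq_pow_iff_modEq, orderOf_three_zmod_five] at h3

lemma exists_eq_add_four_mul_of_lucas_eq {n k x : ℕ} (hx : x ≠ 0)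
    (h : lucas n = 5 * x + lucas k) : ∃ i, n = k + 4 * i := by
  have hkn : k < n := by
    by_contra! hnk
    rcases eq_or_ne n 0 with rfl | hn
    · have := lucas_pos k
      rw [show lucas 0 = 2 from rfl] at h
      omega
    · have := lucas_le_lucas hn hnk
      omega
  have hmod : n ≡ k [MOD 4] := modEq_four_of_lucas_modEq_five (by unfold Nat.ModEq; omega)
  exact ⟨(n - k) / 4, by unfold Nat.ModEq at hmod; omega⟩

lemma five_dvd_of_five_dvd_fib {j : ℕ} (h : 5 ∣ fib j) : 5 ∣ j := by
  have hg : fib (Nat.gcd 5 j) = 5 := by rw [fib_gcd, show fib 5 = 5 from rfl, Nat.gcd_eq_left h]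
  rcases prime_five.eq_one_or_self_of_dvd _ (Nat.gcd_dvd_left 5 j) with h1 | h5
  · rw [h1] at hg; exact absurd hg (by decide)
  · exact h5 ▸ Nat.gcd_dvd_right 5 j

lemma five_pow_dvd_of_five_pow_dvd_fib (e : ℕ) {j : ℕ} (h : 5 ^ e ∣ fib j) : 5 ^ e ∣ j := by
  induction e generalizing j with
  | zero => exact one_dvd j
  | succ e ih =>
    obtain ⟨c, rfl⟩ := five_dvd_of_five_dvd_fib ((dvd_pow_self 5 e.succ_ne_zero).trans h)
    rw [pow_succ', Nat.mul_dvd_mul_iff_left (by norm_num)]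
    apply ih
    rw [← Int.natCast_dvd_natCast, coe_fib_five_mul, pow_succ', mul_assoc] at h
    push_cast at h
    have hu : IsCoprime ((5 : ℤ) ^ e) (5 * fib c ^ 2 * (fib c ^ 2 + (-1) ^ c) + 1) :=
      IsCoprime.pow_left ⟨-(fib c ^ 2 * (fib c ^ 2 + (-1) ^ c)), 1, by ring⟩
    rw [← Int.natCast_dvd_natCast]
    push_cast
    exact hu.dvd_of_dvd_mul_right ((mul_dvd_mul_iff_left (by norm_num : (5 : ℤ) ≠ 0)).mp h)

lemma factorization_fib_five_le (j : ℕ) : (fib j).factorization 5 ≤ j.factorization 5 := by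
  rcases eq_or_ne j 0 with rfl | hj
  · simp
  exact (prime_five.pow_dvd_iff_le_factorization hj).mp
    (five_pow_dvd_of_five_pow_dvd_fib _ (ordProj_dvd _ _))

lemma five_pow_dvd_mul_of_dvd_fib_mul_fib {a b e : ℕ} (h : 5 ^ e ∣ fib a * fib b) :
    5 ^ e ∣ a * b := by
  rcases eq_or_ne a 0 with rfl | ha
  · simp
  rcases eq_or_ne b 0 with rfl | hb
  · simp
  have hfa : fib a ≠ 0 := by simpa using ha
  have hfb : fib b ≠ 0 := by simpa using hb
  rw [prime_five.pow_dvd_iff_le_factorization (mul_ne_zero hfa hfb),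
    Nat.factorization_mul hfa hfb] at h
  rw [prime_five.pow_dvd_iff_le_factorization (mul_ne_zero ha hb), Nat.factorization_mul ha hb]
  simp only [Finsupp.add_apply] at h ⊢
  linarith [factorization_fib_five_le a, factorization_fib_five_le b]

lemma fib_succ_mul_fib_succ_le (a b : ℕ) : fib (a + 1) * fib (b + 1) ≤ fib (a + b + 1) := by
  rw [fib_add]; exact Nat.le_add_left _ _

lemma add_one_lt_of_mul_fib_eq_fib_mul_fib {A m s t : ℕ} (hA : 2 ≤ A) (hm : m ≠ 0)
    (h : A * fib m = fib t * fib s) : m + 1 < t + s := by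
  have hfm : 0 < fib m := fib_pos.2 (Nat.pos_of_ne_zero hm)
  have ht : t ≠ 0 := by rintro rfl; simp at h; omega
  have hs : s ≠ 0 := by rintro rfl; simp at h; omega
  by_contra! hle
  obtain ⟨t, rfl⟩ := exists_eq_add_one_of_ne_zero ht
  obtain ⟨s, rfl⟩ := exists_eq_add_one_of_ne_zero hs
  have := (fib_succ_mul_fib_succ_le t s).trans (fib_mono (by omega : t + s + 1 ≤ m))
  nlinarith

lemma fib_le_or_eq_of_mul_fib_eq_fib_mul_fib {A m s t : ℕ} (hA : 2 ≤ A) (hm : m ≠ 0)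
    (hst : s ≤ t) (h : A * fib m = fib t * fib s) : fib (t / 2 + 1) ≤ A ∨ fib s = A := by
  have hmts := add_one_lt_of_mul_fib_eq_fib_mul_fib hA hm h
  have hg : 0 < t.gcd m := Nat.gcd_pos_of_pos_right _ (Nat.pos_of_ne_zero hm)
  have hdvd : fib t ∣ A * fib (t.gcd m) := by
    rw [fib_gcd, ← Nat.gcd_mul_left]
    exact Nat.dvd_gcd (dvd_mul_left _ _) ⟨fib s, h⟩
  have hle : fib t ≤ A * fib (t.gcd m) :=
    Nat.le_of_dvd (Nat.mul_pos (by omega) (fib_pos.2 hg)) hdvd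
  obtain ⟨q, hq⟩ := Nat.gcd_dvd_left t m
  match q, hq with
  | 0, hq => omega
  | 1, hq =>
    right
    obtain ⟨r, hr⟩ := Nat.gcd_dvd_right t m
    rw [show t.gcd m = t by omega] at hr
    have hmt : m = t := by
      rcases r with _ | _ | r
      · omega
      · omega
      · nlinarith
    subst hmt
    exact Nat.eq_of_mul_eq_mul_left (fib_pos.2 (Nat.pos_of_ne_zero hm)) (by rw [← h]; ring)
  | q + 2, hq =>
    left
    have h2g : 2 * t.gcd m ≤ t := by nlinarith
    obtain ⟨g, hg'⟩ := exists_eq_add_one_of_ne_zero hg.ne'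
    have hprod := fib_succ_mul_fib_succ_le g (t - t.gcd m)
    rw [← hg', show g + (t - t.gcd m) + 1 = t by omega] at hprod
    have := Nat.le_of_mul_le_mul_left (hprod.trans (by linarith : _ ≤ fib (t.gcd m) * A))
      (fib_pos.2 hg)
    exact (fib_mono (by omega)).trans this

lemma ten_pow_le_fib (d : ℕ) : 10 ^ d ≤ fib (5 * d + 2) := by
  induction d with
  | zero => rfl
  | succ d ih =>
    have h5 : fib (5 * d + 7) = 3 * fib (5 * d + 2) + 5 * fib (5 * d + 3) := by
      rw [show 5 * d + 7 = 4 + (5 * d + 2) + 1 by ring, fib_add]; rfl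
    have h2 : fib (5 * d + 2) = fib (5 * d) + fib (5 * d + 1) := fib_add_two
    have h3 : fib (5 * d + 3) = fib (5 * d + 1) + fib (5 * d + 2) := fib_add_two
    have hmono : fib (5 * d) ≤ fib (5 * d + 1) := fib_le_fib_succ
    rw [pow_succ, show 5 * (d + 1) + 2 = 5 * d + 7 by ring]
    omega

lemma two_mul_lucas_lt_fib_add_five (k : ℕ) : 2 * lucas k < fib (k + 5) := by
  have h5 : fib (k + 5) = 3 * fib k + 5 * fib (k + 1) := by
    rw [show k + 5 = 4 + k + 1 by ring, fib_add]; rfl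
  have := lucas_add_fib k
  have : 0 < fib (k + 1) := fib_pos.2 k.succ_pos
  omega

lemma sq_lt_five_pow {c : ℕ} (hc : 6 ≤ c) : (10 * c + 20) ^ 2 < 5 ^ c := by
  induction c, hc using Nat.le_induction with
  | base => norm_num
  | succ c hc ih => rw [pow_succ 5 c]; nlinarith

lemma lucas_concat_reduce {n m k c : ℕ} (hm : m ≠ 0)
    (h : lucas n = 10 ^ (c + 1) * fib m + lucas k) :
    ∃ i, n = k + 4 * i ∧ 2 * 10 ^ c * fib m = fib (k + 2 * i) * fib (2 * i) := by
  have h5 : lucas n = 5 * (2 * 10 ^ c * fib m) + lucas k := by rw [h]; ring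
  obtain ⟨i, rfl⟩ := exists_eq_add_four_mul_of_lucas_eq (by simp [hm]) h5
  refine ⟨i, rfl, ?_⟩
  have := lucas_add_four_mul k i
  linarith

lemma lucas_concat_bounds {m k c i : ℕ} (hm : m ≠ 0) (hk : 10 ^ c ≤ lucas k)
    (hk' : lucas k < 10 ^ (c + 1)) (h : 2 * 10 ^ c * fib m = fib (k + 2 * i) * fib (2 * i)) :
    c < 6 ∧ k < 32 ∧ i < 20 ∧ m < k + 4 * i := by
  have hA : 2 ≤ 2 * 10 ^ c := by have := Nat.one_le_pow c 10 (by norm_num); omega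
  have hmn := add_one_lt_of_mul_fib_eq_fib_mul_fib hA hm h
  have hAk : 2 * 10 ^ c < fib (k + 5) := by
    have := two_mul_lucas_lt_fib_add_five k; omega
  have hi : 2 * i ≤ k + 8 := by
    rcases fib_le_or_eq_of_mul_fib_eq_fib_mul_fib hA hm (by omega) h with hle | heq
    · have := fib_mono.reflect_lt (hle.trans_lt hAk); omega
    · have := fib_mono.reflect_lt (heq.trans_lt hAk); omega
  have hkc : k < 5 * c + 7 :=
    fib_mono.reflect_lt ((fib_le_lucas k).trans_lt (hk'.trans_le (ten_pow_le_fib (c + 1))))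
  have hc : c < 6 := by
    by_contra! hc
    have hi0 : i ≠ 0 := by rintro rfl; simp [hm] at h
    have hdvd : 5 ^ c ∣ (k + 2 * i) * (2 * i) :=
      five_pow_dvd_mul_of_dvd_fib_mul_fib
        ⟨2 * 2 ^ c * fib m, by rw [← h, show 10 = 2 * 5 by rfl, mul_pow]; ring⟩
    have := Nat.le_of_dvd (by positivity) hdvd
    have := sq_lt_five_pow hc
    nlinarith
  omega

set_option synthInstance.maxSize 10000 in
lemma lucas_concat_small_cases :
    ∀ k < 32, ∀ c < 6, 10 ^ c ≤ lucas k → lucas k < 10 ^ (c + 1) →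
    ∀ i < 20, ∀ m < k + 4 * i, 0 < m → 2 * 10 ^ c * fib m = fib (k + 2 * i) * fib (2 * i) →
    k = 1 ∧ i = 1 ∧ c = 0 ∧ m ≤ 2 := by
  decide

theorem lucas_concat_fib_lucas_base10 (n m k d : ℕ) (hm : 1 ≤ m)
    (hd : d = Nat.log 10 (lucas k) + 1) :
    lucas n = 10 ^ d * Nat.fib m + lucas k ↔
      (n, m, k, d) ∈ ({(5, 1, 1, 1), (5, 2, 1, 1)} : Set (ℕ × ℕ × ℕ × ℕ)) := by
  have hk' : lucas k < 10 ^ d := hd ▸ Nat.lt_pow_succ_log_self (by norm_num) _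
  obtain ⟨c, rfl⟩ : ∃ c, d = c + 1 := ⟨_, hd⟩
  have hk : 10 ^ c ≤ lucas k :=
    (Nat.succ_injective hd) ▸ Nat.pow_log_le_self 10 (lucas_pos k).ne'
  simp only [Set.mem_insert_iff, Set.mem_singleton_iff, Prod.mk.injEq]
  constructor
  · intro h
    obtain ⟨i, rfl, hi⟩ := lucas_concat_reduce (by omega) h
    obtain ⟨hc, hk32, hi20, hmi⟩ := lucas_concat_bounds (by omega) hk hk' hi
    obtain ⟨rfl, rfl, rfl, hm2⟩ :=
      lucas_concat_small_cases k hk32 c hc hk hk' i hi20 m hmi hm hi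
    omega
  · rintro (⟨rfl, rfl, rfl, hc⟩ | ⟨rfl, rfl, rfl, hc⟩) <;> obtain rfl : c = 0 := by omega
    all_goals rfl
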